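/- arXiv:2409.03435 — 3 statements merged into one kernel-verified Lean document; each statement's English description precedes it below -/
import Mathlib

section
/- The recursive construction for d = 2^n — taking for each of the 2^{n-1}−1 matchings T of the 2^{n-1} case the merged matching T ∪ (T + 2^{n-1}), together with the 2^{n-1} crossed matchings {(k, 2^{n-1} + ((k+m) mod 2^{n-1})) : k ∈ [2^{n-1}]} for 0 ≤ m < 2^{n-1} — produces exactly 2^n − 1 perfect matchings on {0,...,2^n−1} whose union is all pairs (j,k) with j < k, each appearing exactly once. -/
/-- A matching on {0,...,d-1}: a finite set of pairs (j,k) with j < k < d,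
pairwise vertex-disjoint. -/
def IsMatchingOn (d : ℕ) (M : Finset (ℕ × ℕ)) : Prop :=
  (∀ p ∈ M, p.1 < p.2 ∧ p.2 < d) ∧
  (∀ p ∈ M, ∀ q ∈ M, p ≠ q →
    p.1 ≠ q.1 ∧ p.1 ≠ q.2 ∧ p.2 ≠ q.1 ∧ p.2 ≠ q.2)

/-- A perfect matching on {0,...,d-1}: a matching covering every vertex. -/
def IsPerfectMatchingOn (d : ℕ) (M : Finset (ℕ × ℕ)) : Prop :=
  IsMatchingOn d M ∧ ∀ v < d, ∃ p ∈ M, v = p.1 ∨ v = p.2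

/-- The recursive construction of the 2^n - 1 matchings for dimension 2^n:
base case the single matching {(0,1)}; at each step, merge the previous matchings with
their shifts by 2^(n-1), and add the 2^(n-1) crossed matchings. -/
def construct : ℕ → List (Finset (ℕ × ℕ))
  | 0 => []
  | 1 => [({(0, 1)} : Finset (ℕ × ℕ))]
  | (n + 2) =>
      ((construct (n + 1)).map fun T =>
        T ∪ T.image fun p => (p.1 + 2 ^ (n + 1), p.2 + 2 ^ (n + 1))) ++
      (List.range (2 ^ (n + 1))).map fun m =>
        (Finset.range (2 ^ (n + 1))).image fun k =>
          (k, 2 ^ (n + 1) + (k + m) % 2 ^ (n + 1))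

/-! Write `s = 2 ^ (n - 1)`. A merged matching `T ∪ (T + s)` contains a pair inside the lower half
iff `T` does, a pair `(j + s, k + s)` inside the upper half iff `T` contains `(j, k)`, and no
crossing pair; so by induction each non-crossing pair is covered exactly once by the merged
matchings and never by the crossed ones. A crossing pair `(j, k)` with `j < s ≤ k` lies in the
crossed matching with shift `m` iff `(j + m) % s = k - s`, i.e. iff `m = (k - j) % s`. -/

def shiftUnion (s : ℕ) (T : Finset (ℕ × ℕ)) : Finset (ℕ × ℕ) :=
  T ∪ T.image fun p => (p.1 + s, p.2 + s)

def crossMatching (s m : ℕ) : Finset (ℕ × ℕ) :=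
  (Finset.range s).image fun k => (k, s + (k + m) % s)

theorem construct_add_two (n : ℕ) :
    construct (n + 2) =
      (construct (n + 1)).map (shiftUnion (2 ^ (n + 1))) ++
        (List.range (2 ^ (n + 1))).map (crossMatching (2 ^ (n + 1))) :=
  rfl

section ModArith

variable {s m x y r : ℕ}

theorem eq_of_add_mod_eq (hx : x < s) (hy : y < s) (h : (x + m) % s = (y + m) % s) : x = y := by
  simpa [Nat.ModEq, Nat.mod_eq_of_lt hx, Nat.mod_eq_of_lt hy] using Nat.ModEq.add_right_cancel' m h

theorem exists_add_mod_eq (hr : r < s) : ∃ x < s, (x + m) % s = r := by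
  have hs : 0 < s := by omega
  have hms : m % s < s := Nat.mod_lt m hs
  refine ⟨(r + (s - m % s)) % s, Nat.mod_lt _ hs, ?_⟩
  calc ((r + (s - m % s)) % s + m) % s = (r + (s - m % s) + m % s) % s := by
        rw [Nat.mod_add_mod, Nat.add_mod_mod]
    _ = (r + s) % s := by congr 1; omega
    _ = r := by rw [Nat.add_mod_right, Nat.mod_eq_of_lt hr]

end ModArith

section ShiftUnion

variable {s j k : ℕ} {T : Finset (ℕ × ℕ)}

theorem mem_shiftUnion :
    (j, k) ∈ shiftUnion s T ↔ (j, k) ∈ T ∨ s ≤ j ∧ s ≤ k ∧ (j - s, k - s) ∈ T := by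
  simp only [shiftUnion, Finset.mem_union, Finset.mem_image, Prod.exists, Prod.mk.injEq]
  refine or_congr Iff.rfl ⟨?_, ?_⟩
  · rintro ⟨a, b, h, rfl, rfl⟩
    simpa using h
  · rintro ⟨hj, hk, h⟩
    exact ⟨_, _, h, by omega, by omega⟩

theorem mem_shiftUnion_of_lt (hk : k < s) :
    (j, k) ∈ shiftUnion s T ↔ (j, k) ∈ T := by
  rw [mem_shiftUnion]
  refine ⟨?_, Or.inl⟩
  rintro (h | ⟨-, hsk, -⟩)
  · exact h
  · omega

theorem IsMatchingOn.mem_shiftUnion_of_le (hT : IsMatchingOn s T) (hj : s ≤ j) :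
    (j, k) ∈ shiftUnion s T ↔ (j - s, k - s) ∈ T := by
  rw [mem_shiftUnion]
  constructor
  · rintro (h | ⟨-, -, h⟩)
    · exact absurd (hT.1 _ h) (by omega)
    · exact h
  · intro h
    have := hT.1 _ h
    exact Or.inr ⟨hj, by omega, h⟩

theorem IsMatchingOn.not_mem_shiftUnion (hT : IsMatchingOn s T) (hj : j < s) (hk : s ≤ k) :
    (j, k) ∉ shiftUnion s T := by
  rw [mem_shiftUnion]
  rintro (h | ⟨hsj, -⟩)
  · exact absurd (hT.1 _ h) (by omega)
  · omega

theorem IsPerfectMatchingOn.shiftUnion (hT : IsPerfectMatchingOn s T) :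
    IsPerfectMatchingOn (2 * s) (shiftUnion s T) := by
  obtain ⟨⟨hlt, hdisj⟩, hcover⟩ := hT
  simp only [IsPerfectMatchingOn, IsMatchingOn, _root_.shiftUnion, Finset.mem_union,
    Finset.mem_image]
  refine ⟨⟨?_, ?_⟩, ?_⟩
  · rintro p (hp | ⟨q, hq, rfl⟩)
    · have := hlt p hp; omega
    · have := hlt q hq; simp only; omega
  · rintro p (hp | ⟨p, hp, rfl⟩) q (hq | ⟨q, hq, rfl⟩) hpq
    · exact hdisj p hp q hq hpq
    · have := hlt p hp; have := hlt q hq; simp only; omega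
    · have := hlt p hp; have := hlt q hq; simp only; omega
    · have := hdisj p hp q hq (by rintro rfl; exact hpq rfl)
      simp only; omega
  · intro v hv
    by_cases hvs : v < s
    · obtain ⟨p, hp, hvp⟩ := hcover v hvs
      exact ⟨p, Or.inl hp, hvp⟩
    · obtain ⟨p, hp, hvp⟩ := hcover (v - s) (by omega)
      exact ⟨_, Or.inr ⟨p, hp, rfl⟩, by simp only; omega⟩

end ShiftUnion

section CrossMatching

variable {s m j k : ℕ}

theorem mem_crossMatching : (j, k) ∈ crossMatching s m ↔ j < s ∧ k = s + (j + m) % s := by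
  simp only [crossMatching, Finset.mem_image, Finset.mem_range, Prod.mk.injEq]
  constructor
  · rintro ⟨x, hx, rfl, rfl⟩
    exact ⟨hx, rfl⟩
  · rintro ⟨hj, rfl⟩
    exact ⟨j, hj, rfl, rfl⟩

theorem mem_crossMatching_iff_eq (hm : m < s) (hj : j < s) (hsk : s ≤ k) (hk : k < 2 * s) :
    (j, k) ∈ crossMatching s m ↔ m = (k - j) % s := by
  have hkey : (j + (k - j) % s) % s = k - s := by
    rw [Nat.add_mod_mod, Nat.add_sub_cancel' (by omega), Nat.mod_eq_sub_mod hsk,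
      Nat.mod_eq_of_lt (by omega)]
  rw [mem_crossMatching]
  constructor
  · rintro ⟨-, hkm⟩
    refine eq_of_add_mod_eq (m := j) hm (Nat.mod_lt _ (by omega)) ?_
    rw [add_comm m, add_comm ((k - j) % s), hkey]
    omega
  · rintro rfl
    exact ⟨hj, by omega⟩

theorem isPerfectMatchingOn_crossMatching (hs : 0 < s) :
    IsPerfectMatchingOn (2 * s) (crossMatching s m) := by
  simp only [IsPerfectMatchingOn, IsMatchingOn, crossMatching, Finset.mem_image,
    Finset.mem_range]
  refine ⟨⟨?_, ?_⟩, ?_⟩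
  · rintro _ ⟨x, hx, rfl⟩
    have := Nat.mod_lt (x + m) hs
    simp only; omega
  · rintro _ ⟨x, hx, rfl⟩ _ ⟨y, hy, rfl⟩ hxy
    have hne : x ≠ y := by rintro rfl; exact hxy rfl
    have : (x + m) % s ≠ (y + m) % s := fun h => hne (eq_of_add_mod_eq hx hy h)
    simp only; omega
  · intro v hv
    by_cases hvs : v < s
    · exact ⟨_, ⟨v, hvs, rfl⟩, Or.inl rfl⟩
    · obtain ⟨x, hx, hxm⟩ := exists_add_mod_eq (m := m) (show v - s < s by omega)
      exact ⟨_, ⟨x, hx, rfl⟩, Or.inr (by simp only; omega)⟩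

end CrossMatching

section Counting

variable {s j k : ℕ} {L : List (Finset (ℕ × ℕ))}

theorem countP_map_shiftUnion_of_lt (hk : k < s) :
    (L.map (shiftUnion s)).countP (fun T => decide ((j, k) ∈ T)) =
      L.countP fun T => decide ((j, k) ∈ T) := by
  rw [List.countP_map]
  exact List.countP_congr fun T _ => by simp [mem_shiftUnion_of_lt hk]

theorem countP_map_shiftUnion_of_le (hL : ∀ T ∈ L, IsMatchingOn s T) (hj : s ≤ j) :
    (L.map (shiftUnion s)).countP (fun T => decide ((j, k) ∈ T)) =
      L.countP fun T => decide ((j - s, k - s) ∈ T) := by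
  rw [List.countP_map]
  exact List.countP_congr fun T hT => by simp [(hL T hT).mem_shiftUnion_of_le hj]

theorem countP_map_shiftUnion_eq_zero (hL : ∀ T ∈ L, IsMatchingOn s T) (hj : j < s)
    (hk : s ≤ k) : (L.map (shiftUnion s)).countP (fun T => decide ((j, k) ∈ T)) = 0 := by
  rw [List.countP_eq_zero]
  simp only [List.mem_map, decide_eq_true_eq]
  rintro _ ⟨T, hT, rfl⟩
  exact (hL T hT).not_mem_shiftUnion hj hk

theorem countP_map_crossMatching_eq_zero (h : s ≤ j ∨ k < s) :
    ((List.range s).map (crossMatching s)).countP (fun T => decide ((j, k) ∈ T)) = 0 := by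
  rw [List.countP_eq_zero]
  simp only [List.mem_map, decide_eq_true_eq]
  rintro _ ⟨m, -, rfl⟩ hmem
  rw [mem_crossMatching] at hmem
  omega

theorem countP_map_crossMatching_eq_one (hj : j < s) (hsk : s ≤ k) (hk : k < 2 * s) :
    ((List.range s).map (crossMatching s)).countP (fun T => decide ((j, k) ∈ T)) = 1 := by
  rw [List.countP_map, List.countP_congr (q := fun m => m == (k - j) % s)]
  · exact List.count_eq_one_of_mem List.nodup_range (List.mem_range.mpr (Nat.mod_lt _ (by omega)))
  · intro m hm
    simp [mem_crossMatching_iff_eq (List.mem_range.mp hm) hj hsk hk]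

theorem countP_shiftUnion_append_crossMatching (hL : ∀ T ∈ L, IsMatchingOn s T)
    (hcount : ∀ j k, j < k → k < s → L.countP (fun T => decide ((j, k) ∈ T)) = 1)
    (hjk : j < k) (hk : k < 2 * s) :
    (L.map (shiftUnion s) ++ (List.range s).map (crossMatching s)).countP
      (fun T => decide ((j, k) ∈ T)) = 1 := by
  rw [List.countP_append]
  rcases lt_or_ge k s with hks | hsk
  · rw [countP_map_shiftUnion_of_lt hks, countP_map_crossMatching_eq_zero (Or.inr hks),
      hcount j k hjk hks]
  rcases lt_or_ge j s with hjs | hsj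
  · rw [countP_map_shiftUnion_eq_zero hL hjs hsk, countP_map_crossMatching_eq_one hjs hsk hk]
  · rw [countP_map_shiftUnion_of_le hL hsj, countP_map_crossMatching_eq_zero (Or.inl hsj),
      hcount _ _ (by omega) (by omega)]

end Counting

theorem length_construct (n : ℕ) : (construct n).length = 2 ^ n - 1 := by
  induction n with
  | zero => rfl
  | succ n ih =>
    rcases n with _ | n
    · rfl
    · rw [construct_add_two, List.length_append, List.length_map, List.length_map,
        List.length_range, ih, pow_succ' 2 (n + 1)]
      have := Nat.one_le_two_pow (n := n + 1)
      omega

theorem isPerfectMatchingOn_of_mem_construct {n : ℕ} :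
    ∀ T ∈ construct n, IsPerfectMatchingOn (2 ^ n) T := by
  induction n with
  | zero => simp [construct]
  | succ n ih =>
    rcases n with _ | n
    · simp only [construct, List.mem_singleton, forall_eq]
      refine ⟨⟨by simp, by simp⟩, fun v hv => ?_⟩
      exact ⟨(0, 1), Finset.mem_singleton_self _, by omega⟩
    · rw [construct_add_two, pow_succ' 2 (n + 1)]
      simp only [List.mem_append, List.mem_map, List.mem_range]
      rintro _ (⟨T, hT, rfl⟩ | ⟨m, -, rfl⟩)
      · exact (ih T hT).shiftUnion
      · exact isPerfectMatchingOn_crossMatching (by positivity)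

theorem countP_mem_construct {n j k : ℕ} (hjk : j < k) (hk : k < 2 ^ n) :
    (construct n).countP (fun T => decide ((j, k) ∈ T)) = 1 := by
  induction n generalizing j k with
  | zero => omega
  | succ n ih =>
    rcases n with _ | n
    · obtain ⟨rfl, rfl⟩ : j = 0 ∧ k = 1 := by omega
      rfl
    · rw [construct_add_two]
      rw [pow_succ' 2 (n + 1)] at hk
      exact countP_shiftUnion_append_crossMatching
        (fun T hT => (isPerfectMatchingOn_of_mem_construct T hT).1) (fun _ _ => ih) hjk hk

theorem stmt_12_general (n : ℕ) :
    (construct n).length = 2 ^ n - 1 ∧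
    (∀ T ∈ construct n, IsPerfectMatchingOn (2 ^ n) T) ∧
    (∀ j k : ℕ, j < k → k < 2 ^ n →
      ((construct n).countP fun T => decide ((j, k) ∈ T)) = 1) :=
  ⟨length_construct n, isPerfectMatchingOn_of_mem_construct,
    fun _ _ => countP_mem_construct⟩

/-- The recursive construction for d = 2^n produces exactly 2^n - 1 perfect matchings
on {0,...,2^n-1}, whose union is all pairs (j,k) with j < k, each appearing exactly once. -/
theorem stmt_12 (n : ℕ) (hn : 1 ≤ n) :
    (construct n).length = 2 ^ n - 1 ∧
    (∀ T ∈ construct n, IsPerfectMatchingOn (2 ^ n) T) ∧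
    (∀ j k : ℕ, j < k → k < 2 ^ n →
      ((construct n).countP fun T => decide ((j, k) ∈ T)) = 1) :=
  stmt_12_general n
end

section
/- For n ≥ 1 and 0 ≤ l ≤ n−1, the cyclic shift unitary U_n on ℂ^{2^n} defined by U_n|m⟩ = |(m−1) mod 2^n⟩ satisfies (U_n)^{2^l} = U_{n−l} ⊗ I^{⊗l}, i.e., its 2^l-th power acts as the cyclic shift on the first n−l qubits tensored with identity on the last l qubits. -/
/-!
`shiftU k` is the permutation matrix of the rotation `i ↦ i + 1` of `Fin (2 ^ k)`. Writing an
index of `Fin (2 ^ (n - l) * 2 ^ l)` as `2 ^ l * x + y` with `y < 2 ^ l`, adding `2 ^ l` adds `1`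
to the high digit `x` modulo `2 ^ (n - l)` and leaves the low digit `y` alone, so the `2 ^ l`-th
power of the rotation is the rotation of `x` times the identity on `y`. Taking permutation
matrices turns this identity of permutations into the claimed identity of matrices.
-/

/-- The cyclic shift unitary on ℂ^(2^k): U_k |m⟩ = |(m-1) mod 2^k⟩, i.e.
U_k = ∑_m |m-1 mod 2^k⟩⟨m|. -/
noncomputable def shiftU (k : ℕ) : Matrix (Fin (2 ^ k)) (Fin (2 ^ k)) ℂ :=
  Matrix.of fun a b => if (a : ℕ) = ((b : ℕ) + (2 ^ k - 1)) % 2 ^ k then 1 else 0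

open Kronecker

open Equiv

namespace Matrix

variable {m n R : Type*} [DecidableEq m] [DecidableEq n]

lemma permMatrix_pow [Fintype n] [Semiring R] (σ : Perm n) (p : ℕ) :
    (σ ^ p).permMatrix R = σ.permMatrix R ^ p := by
  induction p with
  | zero => simp
  | succ p ih => rw [pow_succ', permMatrix_mul, ih, pow_succ]

lemma kronecker_permMatrix [MulZeroOneClass R] (σ : Perm m) (τ : Perm n) :
    σ.permMatrix R ⊗ₖ τ.permMatrix R = Perm.permMatrix R (σ.prodCongr τ) := by
  ext ⟨i, i'⟩ ⟨j, j'⟩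
  simp [PEquiv.toMatrix_apply, ← ite_and, and_comm]

lemma reindex_permMatrix [Zero R] [One R] (e : m ≃ n) (σ : Perm m) :
    reindex e e (σ.permMatrix R) = (e.permCongr σ).permMatrix R := by
  ext i j
  simp [PEquiv.toMatrix_apply, eq_symm_apply]

end Matrix

lemma val_finRotate {N : ℕ} (i : Fin N) : (finRotate N i : ℕ) = (i + 1) % N := by
  have : NeZero N := i.neZero
  rw [finRotate_apply, Fin.val_add, Fin.val_one', Nat.add_mod_mod]

lemma val_finRotate_pow {N : ℕ} (p : ℕ) (i : Fin N) :
    ((finRotate N ^ p) i : ℕ) = (i + p) % N := by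
  induction p with
  | zero => simp [Nat.mod_eq_of_lt i.isLt]
  | succ p ih => rw [pow_succ', Perm.mul_apply, val_finRotate, ih, Nat.mod_add_mod, add_assoc]

lemma finRotate_pow_self (N : ℕ) : finRotate N ^ N = 1 := by
  ext i
  rw [val_finRotate_pow, Nat.add_mod_right, Nat.mod_eq_of_lt i.isLt, Perm.one_apply]

lemma val_finRotate_symm {N : ℕ} (i : Fin N) :
    ((finRotate N).symm i : ℕ) = (i + (N - 1)) % N := by
  have hsymm : (finRotate N).symm = finRotate N ^ (N - 1) := by
    rw [← Perm.inv_def]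
    apply inv_eq_of_mul_eq_one_right
    rw [← pow_succ', Nat.sub_add_cancel i.pos, finRotate_pow_self]
  rw [hsymm, val_finRotate_pow]

lemma shiftU_eq_permMatrix (k : ℕ) : shiftU k = (finRotate (2 ^ k)).permMatrix ℂ := by
  ext a b
  simp only [shiftU, Matrix.of_apply, PEquiv.toMatrix_apply, toPEquiv_apply, Option.mem_def,
    Option.some_inj, ← val_finRotate_symm, Fin.val_inj, eq_symm_apply]

lemma finRotate_pow_eq_permCongr {m n N : ℕ} (h : m * n = N) :
    finRotate N ^ n =
      (finProdFinEquiv.trans (finCongr h)).permCongr ((finRotate m).prodCongr (.refl _)) := by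
  subst h
  ext z
  obtain ⟨⟨x, y⟩, rfl⟩ := finProdFinEquiv.surjective z
  have hy : (y : ℕ) < n := y.isLt
  simp only [permCongr_apply, finCongr_refl, trans_refl, symm_apply_apply, prodCongr_apply,
    Prod.map, refl_apply, val_finRotate_pow, val_finRotate, finProdFinEquiv_apply_val]
  rw [mul_comm m n, Nat.mod_mul, show (y : ℕ) + n * x + n = y + n * (x + 1) by ring,
    Nat.add_mul_mod_self_left, Nat.add_mul_div_left _ _ (by omega), Nat.mod_eq_of_lt hy,
    Nat.div_eq_of_lt hy, zero_add]

/-- For 1 ≤ n and l ≤ n-1, the 2^l-th power of the cyclic shift on n qubits is the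
cyclic shift on the first n-l qubits tensored with the identity on the last l qubits,
under the binary (big-endian) identification ℂ^(2^n) ≃ ℂ^(2^(n-l)) ⊗ ℂ^(2^l). -/
theorem stmt_14 (n l : ℕ) (hl : l ≤ n - 1) :
    (shiftU n) ^ (2 ^ l) =
      Matrix.reindex
        (finProdFinEquiv.trans (finCongr (by rw [← pow_add]; congr 1; omega)))
        (finProdFinEquiv.trans (finCongr (by rw [← pow_add]; congr 1; omega)))
        (shiftU (n - l) ⊗ₖ (1 : Matrix (Fin (2 ^ l)) (Fin (2 ^ l)) ℂ)) := by
  rw [shiftU_eq_permMatrix, shiftU_eq_permMatrix, ← Matrix.permMatrix_refl,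
    Matrix.kronecker_permMatrix, Matrix.reindex_permMatrix, ← Matrix.permMatrix_pow,
    finRotate_pow_eq_permCongr]
end

section
/- For even d where d/2 is even, given d/2 − 1 matchings covering all pairs on {0,...,d/2−1}, the construction assigning merged matchings T_t^d = T_t^{d/2} ∪ (T_t^{d/2} + d/2) for 1 ≤ t ≤ d/2−1 and crossed matchings T_t^d = {(j, d/2 + ((t+j) mod d/2)) : 0 ≤ j ≤ d/2−1} for d/2 ≤ t ≤ d−1 yields d−1 perfect matchings on {0,...,d−1} covering every pair (j,k) with 0 ≤ j < k ≤ d−1 exactly once. -/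
/-!
Write `m = d / 2`. A pair inside the lower half `{0, …, m - 1}` or inside the upper half can
only lie in a merged matching, and it lies in the `t`-th one exactly when it (or its translate
by `-m`) lies in `M t`; so it is covered once because the `M t` cover every pair once. A
crossing pair `(j, m + v)` lies in the `t`-th crossed matching exactly when `(t + j) % m = v`,
and as `t` runs over the `m` consecutive indices `m - 1, …, 2m - 2` of the crossed matchings,
`(t + j) % m` takes every residue exactly once. The same fact, with the roles of `t` and `j`
exchanged, makes each crossed matching perfect.
-/

open Finset

theorem Nat.bijOn_add_mod_Ico (a c m : ℕ) :
    Set.BijOn (fun t => (t + c) % m) (Ico a (a + m) : Set ℕ) (range m : Set ℕ) := by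
  have hmaps : Set.MapsTo (fun t => (t + c) % m) (Ico a (a + m) : Set ℕ) (range m : Set ℕ) :=
    fun t ht => by
      simp only [coe_Ico, Set.mem_Ico, coe_range, Set.mem_Iio] at ht ⊢
      exact Nat.mod_lt _ (by omega)
  have hinj : Set.InjOn (fun t => (t + c) % m) (Ico a (a + m) : Set ℕ) := by
    intro t₁ h₁ t₂ h₂ h
    simp only [coe_Ico, Set.mem_Ico] at h₁ h₂
    refine Nat.ModEq.eq_of_abs_lt (Nat.ModEq.add_right_cancel' c h) (abs_sub_lt_iff.2 ?_)
    omega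
  refine ⟨hmaps, hinj, surjOn_of_injOn_of_card_le _ hmaps hinj ?_⟩
  simp

theorem Fin.existsUnique_of_existsUnique_lt {n n' : ℕ} (hn : n ≤ n') {Q : Fin n → Prop}
    (h : ∃! s, Q s) : ∃! t : Fin n', ∃ ht : (t : ℕ) < n, Q ⟨t, ht⟩ := by
  obtain ⟨s, hs, huniq⟩ := h
  refine ⟨Fin.castLE hn s, ⟨s.2, hs⟩, ?_⟩
  rintro t ⟨ht, hQ⟩
  exact Fin.ext (congrArg Fin.val (huniq ⟨t, ht⟩ hQ) : (t : ℕ) = s)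

def shiftPairs (c : ℕ) (T : Finset (ℕ × ℕ)) : Finset (ℕ × ℕ) :=
  T.image fun p => (p.1 + c, p.2 + c)

def crossedMatching (m t : ℕ) : Finset (ℕ × ℕ) :=
  (range m).image fun j => (j, m + (t + j) % m)

def doubledMatching (m : ℕ) (M : Fin (m - 1) → Finset (ℕ × ℕ)) (t : ℕ) : Finset (ℕ × ℕ) :=
  if h : t < m - 1 then M ⟨t, h⟩ ∪ shiftPairs m (M ⟨t, h⟩) else crossedMatching m t

theorem mem_shiftPairs {c : ℕ} {T : Finset (ℕ × ℕ)} {j k : ℕ} :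
    (j, k) ∈ shiftPairs c T ↔ c ≤ j ∧ c ≤ k ∧ (j - c, k - c) ∈ T := by
  simp only [shiftPairs, mem_image, Prod.ext_iff]
  constructor
  · rintro ⟨p, hp, rfl, rfl⟩
    simpa using hp
  · rintro ⟨hj, hk, h⟩
    exact ⟨_, h, by omega, by omega⟩

theorem mem_crossedMatching {m t j k : ℕ} :
    (j, k) ∈ crossedMatching m t ↔ j < m ∧ k = m + (t + j) % m := by
  simp only [crossedMatching, mem_image, mem_range, Prod.ext_iff]
  constructor
  · rintro ⟨j, hj, rfl, rfl⟩
    exact ⟨hj, rfl⟩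
  · rintro ⟨hj, rfl⟩
    exact ⟨j, hj, rfl, rfl⟩

theorem IsPerfectMatchingOn.union_shiftPairs {m : ℕ} {T : Finset (ℕ × ℕ)}
    (hT : IsPerfectMatchingOn m T) : IsPerfectMatchingOn (2 * m) (T ∪ shiftPairs m T) := by
  obtain ⟨⟨hbound, hdisj⟩, hcover⟩ := hT
  simp only [shiftPairs]
  refine ⟨⟨?_, ?_⟩, ?_⟩
  · simp only [mem_union, mem_image]
    rintro _ (hp | ⟨p, hp, rfl⟩) <;> have := hbound _ hp <;> omega
  · simp only [mem_union, mem_image]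
    rintro _ (hp | ⟨p, hp, rfl⟩) _ (hq | ⟨q, hq, rfl⟩) hne
    · exact hdisj _ hp _ hq hne
    · have := hbound _ hp; omega
    · have := hbound _ hq; omega
    · have := hdisj _ hp _ hq (by rintro rfl; exact hne rfl); omega
  · intro v hv
    rcases lt_or_ge v m with hvm | hvm
    · obtain ⟨p, hp, hvp⟩ := hcover v hvm
      exact ⟨p, mem_union_left _ hp, hvp⟩
    · obtain ⟨p, hp, hvp⟩ := hcover (v - m) (by omega)
      exact ⟨_, mem_union_right _ (mem_image_of_mem _ hp), by omega⟩

theorem isPerfectMatchingOn_crossedMatching (m t : ℕ) :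
    IsPerfectMatchingOn (2 * m) (crossedMatching m t) := by
  have hbij := Nat.bijOn_add_mod_Ico 0 t m
  simp only [zero_add, Nat.Ico_zero_eq_range] at hbij
  simp only [crossedMatching, IsPerfectMatchingOn, IsMatchingOn, mem_image, mem_range]
  refine ⟨⟨?_, ?_⟩, ?_⟩
  · rintro _ ⟨j, hj, rfl⟩
    have := Nat.mod_lt (t + j) (by omega : 0 < m)
    omega
  · rintro _ ⟨j₁, hj₁, rfl⟩ _ ⟨j₂, hj₂, rfl⟩ hne
    have hj : j₁ ≠ j₂ := by rintro rfl; exact hne rfl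
    have hmod : (t + j₁) % m ≠ (t + j₂) % m := fun h =>
      hj (hbij.injOn (by simpa using hj₁) (by simpa using hj₂) (by simpa [add_comm] using h))
    omega
  · intro v hv
    rcases lt_or_ge v m with hvm | hvm
    · exact ⟨_, ⟨v, hvm, rfl⟩, Or.inl rfl⟩
    · obtain ⟨j, hj, hjv⟩ := hbij.surjOn (show v - m ∈ (range m : Set ℕ) by simp; omega)
      refine ⟨_, ⟨j, by simpa using hj, rfl⟩, Or.inr ?_⟩
      simp only [add_comm j t] at hjv
      omega

section doubledMatching

variable {m : ℕ} {M : Fin (m - 1) → Finset (ℕ × ℕ)}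

theorem isPerfectMatchingOn_doubledMatching (hM : ∀ s, IsPerfectMatchingOn m (M s)) (t : ℕ) :
    IsPerfectMatchingOn (2 * m) (doubledMatching m M t) := by
  unfold doubledMatching
  split
  · exact (hM _).union_shiftPairs
  · exact isPerfectMatchingOn_crossedMatching m t

theorem mem_doubledMatching_of_lt {j k : ℕ} (hk : k < m) (t : ℕ) :
    (j, k) ∈ doubledMatching m M t ↔ ∃ ht : t < m - 1, (j, k) ∈ M ⟨t, ht⟩ := by
  unfold doubledMatching
  split_ifs with ht
  · simp only [mem_union, mem_shiftPairs, ht, exists_true_left, not_le.2 hk, false_and,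
      and_false, or_false]
  · simp only [mem_crossedMatching, ht, IsEmpty.exists_iff, iff_false]
    omega

theorem mem_doubledMatching_of_le (hM : ∀ s, IsMatchingOn m (M s)) {j k : ℕ} (hj : m ≤ j)
    (t : ℕ) :
    (j, k) ∈ doubledMatching m M t ↔ ∃ ht : t < m - 1, (j - m, k - m) ∈ M ⟨t, ht⟩ := by
  unfold doubledMatching
  split_ifs with ht
  · have hlow : (j, k) ∉ M ⟨t, ht⟩ := fun h => by have := (hM _).1 _ h; omega
    simp only [mem_union, mem_shiftPairs, hlow, ht, exists_true_left, false_or]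
    exact ⟨fun h => h.2.2, fun h => ⟨hj, by have := (hM _).1 _ h; omega, h⟩⟩
  · simp only [mem_crossedMatching, ht, IsEmpty.exists_iff, iff_false]
    omega

theorem mem_doubledMatching_of_lt_of_le (hM : ∀ s, IsMatchingOn m (M s)) {j k : ℕ} (hj : j < m)
    (hk : m ≤ k) (t : ℕ) :
    (j, k) ∈ doubledMatching m M t ↔ m - 1 ≤ t ∧ (t + j) % m = k - m := by
  unfold doubledMatching
  split_ifs with ht
  · have hlow : (j, k) ∉ M ⟨t, ht⟩ := fun h => by have := (hM _).1 _ h; omega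
    simp only [mem_union, mem_shiftPairs, hlow, not_le.2 hj, false_and, or_false, false_iff]
    omega
  · simp only [mem_crossedMatching]
    omega

theorem existsUnique_mem_doubledMatching (hM : ∀ s, IsMatchingOn m (M s))
    (hMcover : ∀ j k : ℕ, j < k → k < m → ∃! s, (j, k) ∈ M s) {j k : ℕ} (hjk : j < k)
    (hk : k < 2 * m) : ∃! t : Fin (2 * m - 1), (j, k) ∈ doubledMatching m M t := by
  have hle : m - 1 ≤ 2 * m - 1 := by omega
  rcases lt_or_ge k m with hkm | hkm
  · simp only [mem_doubledMatching_of_lt hkm]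
    exact Fin.existsUnique_of_existsUnique_lt hle (hMcover j k hjk hkm)
  rcases le_or_gt m j with hjm | hjm
  · simp only [mem_doubledMatching_of_le hM hjm]
    exact Fin.existsUnique_of_existsUnique_lt hle (hMcover _ _ (by omega) (by omega))
  simp only [mem_doubledMatching_of_lt_of_le hM hjm hkm]
  have hbij := Nat.bijOn_add_mod_Ico (m - 1) j m
  obtain ⟨t, ht, htk⟩ := hbij.surjOn (show k - m ∈ (range m : Set ℕ) by simp; omega)
  simp only [coe_Ico, Set.mem_Ico] at ht
  refine ⟨⟨t, by omega⟩, ⟨ht.1, htk⟩, ?_⟩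
  rintro t' ⟨ht', ht'k⟩
  exact Fin.ext (hbij.injOn (by simp; omega) (by simp; omega) (ht'k.trans htk.symm))

end doubledMatching

theorem stmt_17_general (d : ℕ) (hde : Even d)
    (M : Fin (d / 2 - 1) → Finset (ℕ × ℕ))
    (hM : ∀ t, IsPerfectMatchingOn (d / 2) (M t))
    (hMcover : ∀ j k : ℕ, j < k → k < d / 2 → ∃! t, (j, k) ∈ M t)
    (N : Fin (d - 1) → Finset (ℕ × ℕ))
    (hN : ∀ t : Fin (d - 1),
      N t = if h : (t : ℕ) < d / 2 - 1
        then M ⟨t, h⟩ ∪ (M ⟨t, h⟩).image (fun p => (p.1 + d / 2, p.2 + d / 2))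
        else (Finset.range (d / 2)).image
          (fun j => (j, d / 2 + ((t : ℕ) + j) % (d / 2)))) :
    (∀ t, IsPerfectMatchingOn d (N t)) ∧
    (∀ j k : ℕ, j < k → k < d → ∃! t, (j, k) ∈ N t) := by
  generalize hm : d / 2 = m at M hM hMcover hN
  obtain rfl : d = 2 * m := by obtain ⟨a, rfl⟩ := hde; omega
  obtain rfl : N = fun t : Fin (2 * m - 1) => doubledMatching m M t := funext hN
  exact ⟨fun t => isPerfectMatchingOn_doubledMatching hM t,
    fun j k hjk hk => existsUnique_mem_doubledMatching (fun s => (hM s).1) hMcover hjk hk⟩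

/-- For even d with d/2 even: from d/2 - 1 perfect matchings covering all pairs on
{0,...,d/2-1}, the merged matchings T_t ∪ (T_t + d/2) for t < d/2 - 1 together with
the crossed matchings {(j, d/2 + (t+j) mod (d/2))} for d/2 ≤ t ≤ d-1 form d-1 perfect
matchings on {0,...,d-1} covering every pair (j,k), j < k < d, exactly once. -/
theorem stmt_17 (d : ℕ) (hde : Even d) (hd2e : Even (d / 2)) (hpos : 0 < d)
    (M : Fin (d / 2 - 1) → Finset (ℕ × ℕ))
    (hM : ∀ t, IsPerfectMatchingOn (d / 2) (M t))
    (hMcover : ∀ j k : ℕ, j < k → k < d / 2 → ∃! t, (j, k) ∈ M t)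
    (N : Fin (d - 1) → Finset (ℕ × ℕ))
    (hN : ∀ t : Fin (d - 1),
      N t = if h : (t : ℕ) < d / 2 - 1
        then M ⟨t, h⟩ ∪ (M ⟨t, h⟩).image (fun p => (p.1 + d / 2, p.2 + d / 2))
        else (Finset.range (d / 2)).image
          (fun j => (j, d / 2 + ((t : ℕ) + j) % (d / 2)))) :
    (∀ t, IsPerfectMatchingOn d (N t)) ∧
    (∀ j k : ℕ, j < k → k < d → ∃! t, (j, k) ∈ N t) :=
  stmt_17_general d hde M hM hMcover N hN
end
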